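/- Monotonicity of register protocols (copycat lemma): for any register protocol and configurations γ_1, γ_2, γ_2', if γ_1 →* γ_2 and γ_2 ⪯ γ_2', then there exists a configuration γ_1' such that γ_1 ⪯ γ_1' and γ_1' →* γ_2'. -/

import Mathlib

/-- Operation type of a register protocol: read or write. -/
inductive Op : Type
  | R : Op
  | W : Op
deriving DecidableEq

instance instFintypeOp : Fintype Op :=
  ⟨{Op.R, Op.W}, by intro x; cases x <;> simp⟩

/-- A location has at least one outgoing transition. -/
def Nonblock {Q D : Type*} (T : Set (Q × Op × D × Q)) : Prop :=
  ∀ q : Q, ∃ op d q', (q, op, d, q') ∈ T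

/-- Whenever a read transition exists from `q`, reads of every datum are enabled in `q`. -/
def ReadTotal {Q D : Type*} (T : Set (Q × Op × D × Q)) : Prop :=
  ∀ q d' q', (q, Op.R, d', q') ∈ T → ∀ d : D, ∃ qd, (q, Op.R, d, qd) ∈ T

/-- One step of the distributed system associated with transition set `T`:
a configuration is a pair of a finite multiset of locations and a register datum. -/
def IsStep {Q D : Type*} [DecidableEq Q] (T : Set (Q × Op × D × Q)) :
    Multiset Q × D → Multiset Q × D → Prop := fun γ γ' =>
  ∃ q op d'' q', (q, op, d'', q') ∈ T ∧ q ∈ γ.1 ∧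
    γ'.1 = γ.1 - {q} + {q'} ∧
    ((op = Op.R ∧ γ.2 = d'' ∧ γ'.2 = d'') ∨ (op = Op.W ∧ γ'.2 = d''))

/-- Reachability: reflexive-transitive closure of the step relation. -/
def Reach {Q D : Type*} [DecidableEq Q] (T : Set (Q × Op × D × Q)) :
    Multiset Q × D → Multiset Q × D → Prop :=
  Relation.ReflTransGen (IsStep T)

/-- `PostStar T S` is the set of configurations reachable from some configuration of `S`. -/
def PostStar {Q D : Type*} [DecidableEq Q] (T : Set (Q × Op × D × Q))
    (S : Set (Multiset Q × D)) : Set (Multiset Q × D) :=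
  {γ' | ∃ γ ∈ S, Reach T γ γ'}

/-- `PreStar T S` is the set of configurations from which some configuration of `S`
is reachable. -/
def PreStar {Q D : Type*} [DecidableEq Q] (T : Set (Q × Op × D × Q))
    (S : Set (Multiset Q × D)) : Set (Multiset Q × D) :=
  {γ | ∃ γ' ∈ S, Reach T γ γ'}

/-- `[qf]`: configurations containing at least one process in location `qf`. -/
def TargetSet {Q D : Type*} [DecidableEq Q] (qf : Q) : Set (Multiset Q × D) :=
  {γ | 0 < γ.1.count qf}

/-- The order `⪯` on configurations: same register content, same support,
and componentwise smaller multiset. -/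
def ConfLE {Q D : Type*} [DecidableEq Q] (γ γ' : Multiset Q × D) : Prop :=
  γ.2 = γ'.2 ∧ γ.1.toFinset = γ'.1.toFinset ∧ γ.1 ≤ γ'.1

/-- Upward closure of a set of configurations with respect to `⪯`. -/
def UpSet {Q D : Type*} [DecidableEq Q] (B : Set (Multiset Q × D)) :
    Set (Multiset Q × D) :=
  {γ' | ∃ γ ∈ B, ConfLE γ γ'}

namespace ConfLE

variable {Q D : Type*} [DecidableEq Q] {γ γ' : Multiset Q × D}

lemma subset (h : ConfLE γ γ') : γ'.1 ⊆ γ.1 :=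
  Multiset.toFinset_subset.mp h.2.1.ge

lemma of_subset (hd : γ.2 = γ'.2) (hle : γ.1 ≤ γ'.1) (hsub : γ'.1 ⊆ γ.1) : ConfLE γ γ' :=
  ⟨hd, (Multiset.toFinset_subset.mpr (Multiset.subset_of_le hle)).antisymm
    (Multiset.toFinset_subset.mpr hsub), hle⟩

end ConfLE

section Steps

variable {Q D : Type*} [DecidableEq Q] {T : Set (Q × Op × D × Q)}
  {q q' : Q} {op : Op} {d d₀ : D}

lemma isStep_add_singleton (hT : (q, op, d, q') ∈ T) (hd₀ : op = Op.R → d₀ = d)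
    (μ : Multiset Q) : IsStep T (μ + {q}, d₀) (μ + {q'}, d) := by
  refine ⟨q, op, d, q', hT, by simp, by rw [add_tsub_cancel_right], ?_⟩
  cases op with
  | R => exact Or.inl ⟨rfl, hd₀ rfl, rfl⟩
  | W => exact Or.inr ⟨rfl, rfl⟩

lemma reach_add_replicate (hT : (q, op, d, q') ∈ T) (hd₀ : op = Op.R → d₀ = d) (n : ℕ)
    (μ : Multiset Q) :
    Reach T (μ + Multiset.replicate (n + 1) q, d₀) (μ + Multiset.replicate (n + 1) q', d) := by
  induction n generalizing μ d₀ with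
  | zero =>
    rw [zero_add, Multiset.replicate_one, Multiset.replicate_one]
    exact .single (isStep_add_singleton hT hd₀ μ)
  | succ n ih =>
    have hrest := ih (d₀ := d) (fun _ => rfl) (μ + {q'})
    rw [add_right_comm μ {q'}, add_right_comm μ {q'}] at hrest
    rw [Multiset.replicate_add (n + 1) 1, Multiset.replicate_add (n + 1) 1, Multiset.replicate_one,
      Multiset.replicate_one, ← add_assoc, ← add_assoc]
    exact .head (isStep_add_singleton hT hd₀ _) hrest

lemma IsStep.exists_add_singleton {γ γ' : Multiset Q × D} (h : IsStep T γ γ') :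
    ∃ (μ : Multiset Q) (q : Q) (op : Op) (d : D) (q' : Q), (q, op, d, q') ∈ T ∧
      (op = Op.R → γ.2 = d) ∧ γ.1 = μ + {q} ∧ γ' = (μ + {q'}, d) := by
  obtain ⟨q, op, d, q', hT, hq, hγ', hreg⟩ := h
  obtain ⟨μ, hμ⟩ := Multiset.exists_cons_of_mem hq
  have hγ : γ.1 = μ + {q} := by rw [hμ, add_comm, Multiset.singleton_add]
  refine ⟨μ, q, op, d, q', hT, ?_, hγ, Prod.ext ?_ ?_⟩
  · rintro rfl
    rcases hreg with ⟨-, h, -⟩ | ⟨h, -⟩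
    · exact h
    · cases h
  · rw [hγ', hγ, add_tsub_cancel_right]
  · rcases hreg with ⟨-, -, h⟩ | ⟨-, h⟩ <;> exact h

/-- The extra tokens of `γ₂'` sitting in the target `q'` of the step are copycats that start in
its source `q` and fire the same transition; all other extra tokens stay where they are. -/
lemma IsStep.exists_confLE_reach {γ₁ γ₂ γ₂' : Multiset Q × D} (h : IsStep T γ₁ γ₂)
    (h₂ : ConfLE γ₂ γ₂') : ∃ γ₁', ConfLE γ₁ γ₁' ∧ Reach T γ₁' γ₂' := by
  obtain ⟨μ, q, op, d, q', hT, hd₀, hγ₁, rfl⟩ := h.exists_add_singleton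
  set e := γ₂'.1 - (μ + {q'})
  set e₀ := e.filter (· ≠ q')
  set k := e.count q'
  have hsplit : e = Multiset.replicate k q' + e₀ := by
    rw [← Multiset.filter_eq']
    exact (Multiset.filter_add_not _ e).symm
  have he : γ₂'.1 = μ + e₀ + Multiset.replicate (k + 1) q' := by
    have hγ₂' : γ₂'.1 = μ + {q'} + e := (add_tsub_cancel_of_le h₂.2.2).symm
    rw [hγ₂', hsplit, Multiset.replicate_add, Multiset.replicate_one]
    abel
  have he₀ : e₀ ⊆ μ := fun x hx => by
    obtain ⟨hxe, hxq'⟩ := Multiset.mem_filter.mp hx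
    have := h₂.subset (Multiset.mem_of_le tsub_le_self hxe)
    simpa [hxq'] using this
  refine ⟨(μ + e₀ + Multiset.replicate (k + 1) q, γ₁.2), .of_subset rfl ?_ ?_, ?_⟩
  · rw [hγ₁, Multiset.replicate_add, Multiset.replicate_one, ← add_assoc]
    exact add_le_add_left (Multiset.le_add_right μ e₀ |>.trans (Multiset.le_add_right _ _)) _
  · intro x hx
    rw [hγ₁, Multiset.mem_add, Multiset.mem_singleton]
    rcases Multiset.mem_add.mp hx with hx | hx
    · rcases Multiset.mem_add.mp hx with hx | hx
      · exact .inl hx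
      · exact .inl (he₀ hx)
    · exact .inr (Multiset.eq_of_mem_replicate hx)
  · have hd : γ₂'.2 = d := h₂.1.symm
    rw [show γ₂' = (γ₂'.1, γ₂'.2) from rfl, he, hd]
    exact reach_add_replicate hT hd₀ _ _

end Steps

theorem stmt_2_general {Q D : Type*} [DecidableEq Q]
    (T : Set (Q × Op × D × Q))
    (γ1 γ2 γ2' : Multiset Q × D)
    (h12 : Reach T γ1 γ2) (h2 : ConfLE γ2 γ2') :
    ∃ γ1' : Multiset Q × D, ConfLE γ1 γ1' ∧ Reach T γ1' γ2' := by
  induction h12 generalizing γ2' with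
  | refl => exact ⟨γ2', h2, .refl⟩
  | tail _ hstep ih =>
    obtain ⟨γ', hγ', hreach'⟩ := hstep.exists_confLE_reach h2
    obtain ⟨γ1', hγ1', hreach⟩ := ih γ' hγ'
    exact ⟨γ1', hγ1', hreach.trans hreach'⟩

/-- copycat lemma: if `γ1 →* γ2` and `γ2 ⪯ γ2'`, then there is `γ1'`
with `γ1 ⪯ γ1'` and `γ1' →* γ2'`. -/
theorem stmt_2 {Q D : Type*} [DecidableEq Q]
    (T : Set (Q × Op × D × Q)) (hnb : Nonblock T) (hrt : ReadTotal T)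
    (γ1 γ2 γ2' : Multiset Q × D)
    (h12 : Reach T γ1 γ2) (h2 : ConfLE γ2 γ2') :
    ∃ γ1' : Multiset Q × D, ConfLE γ1 γ1' ∧ Reach T γ1' γ2' :=
  stmt_2_general T γ1 γ2 γ2' h12 h2
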